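/- arXiv:2501.09572 — 2 statements merged into one kernel-verified Lean document; each statement's English description precedes it below -/
import Mathlib

section
/- There exists ε₀ > 0 such that for all 0 < ε ≤ ε₀ the following hold: p is continuous on [0,1]; the function 1/p is Lebesgue integrable on [0,1]; p(x) > 0 for all x ∈ (x₀, 1−x₀); p(x) < 0 for all x ∈ [0, x₀) ∪ (1−x₀, 1]; and p(x₀) = p(1−x₀) = 0. -/
open Real Set Filter Topology MeasureTheory

/-- The degenerate point `x₀ = (2 − √3)ε`. -/
noncomputable def x0 (ε : ℝ) : ℝ := (2 - Real.sqrt 3) * ε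

/-- Leading coefficient `φ₂` of `D_ε` on the interval. -/
noncomputable def phi2 (ε x : ℝ) : ℝ :=
  if x ≤ ε then (1/12) * (1 - 4*(x/ε) + (x/ε)^2)
  else if x ≤ 1 - ε then -(1/6)
  else (1/12) * (1 - 4*((1-x)/ε) + ((1-x)/ε)^2)

/-- First-order coefficient `φ₁` of `D_ε` on the interval. -/
noncomputable def phi1 (ε x : ℝ) : ℝ :=
  if x ≤ ε then -6 * (1 - x/ε) * ((1 + x/ε)^3)⁻¹
  else if x ≤ 1 - ε then 0
  else 6 * (1 - (1-x)/ε) * ((1 + (1-x)/ε)^3)⁻¹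

/-- Integration-factor function `g` on `[0, ε]`. -/
noncomputable def gfun (ε x : ℝ) : ℝ :=
  Real.sign (x - x0 ε) * |x - x0 ε| ^ ((4 + 2*Real.sqrt 3) * ε) *
    |x - 4*ε + x0 ε| ^ ((4 - 2*Real.sqrt 3) * ε) *
    (x + ε) ^ (-(8*ε)) *
    Real.exp (12*ε^3/(ε+x)^2 + 12*ε^2/(ε+x))

/-- Sturm–Liouville principal coefficient `p`. -/
noncomputable def pfun (ε x : ℝ) : ℝ :=
  if x ≤ ε then gfun ε x / (6 * gfun ε ε)
  else if x ≤ 1 - ε then 1/6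
  else gfun ε (1-x) / (6 * gfun ε ε)

/-- Sturm–Liouville weight `w = -p/φ₂`. -/
noncomputable def wfun (ε x : ℝ) : ℝ := -pfun ε x / phi2 ε x

/-!
Near the degenerate point, `g(x) = sgn(x - x₀) |x - x₀|^a h(x)` with `a = (4 + 2√3)ε` and
`h = gRegular ε` continuous and positive on `[0, ε]`. Hence `g` is continuous, vanishes only at
`x₀`, changes sign there, and `|1/g| = |x - x₀|^(-a) / h` is integrable as soon as `a < 1`.
The three pieces of `p` glue into `p(x) = g(min(x, 1 - x, ε)) / (6 g(ε))`, which gives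
continuity and the symmetry `p(1 - x) = p(x)`.
-/

lemma one_lt_sqrt_three : 1 < √3 := by
  rw [Real.lt_sqrt zero_le_one]; norm_num

lemma sqrt_three_lt_two : √3 < 2 := by
  rw [Real.sqrt_lt' two_pos]; norm_num

lemma continuous_sign_mul_abs_rpow {a : ℝ} (ha : 0 < a) :
    Continuous fun y : ℝ => Real.sign y * |y| ^ a := by
  have h : (fun y : ℝ => Real.sign y * |y| ^ a) = fun y => if y ≤ 0 then -|y| ^ a else |y| ^ a := by
    funext y
    rcases lt_trichotomy y 0 with hy | rfl | hy
    · simp [Real.sign_of_neg hy, hy.le]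
    · simp [Real.sign_zero, Real.zero_rpow ha.ne']
    · simp [Real.sign_of_pos hy, hy.not_ge]
  have habs : Continuous fun y : ℝ => |y| ^ a := continuous_abs.rpow_const fun _ => Or.inr ha.le
  rw [h]
  exact habs.neg.if_le habs continuous_id continuous_const fun y hy => by
    simp [hy, Real.zero_rpow ha.ne']

lemma intervalIntegrable_abs_sub_rpow {r : ℝ} (hr : -1 < r) (c a b : ℝ) :
    IntervalIntegrable (fun x => |x - c| ^ r) volume a b := by
  have hloc : LocallyIntegrable (fun y : ℝ => |y| ^ r) :=
    locallyIntegrable_of_norm_le_rpow (C := 1) (α := -r) (by simp)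
      (by rw [Module.finrank_self, Nat.cast_one]; linarith)
      (ae_of_all _ fun y => by simp [abs_rpow_of_nonneg (abs_nonneg y)])
      (continuous_abs.measurable.pow_const r).aestronglyMeasurable
  have := ((intervalIntegrable_iff' (a := a - c) (b := b - c)).2
    (hloc.integrableOn_isCompact isCompact_uIcc)).comp_sub_right c
  simpa using this

section

variable {ε x : ℝ}

lemma x0_pos (hε : 0 < ε) : 0 < x0 ε :=
  mul_pos (by linarith [sqrt_three_lt_two]) hε

lemma x0_lt_self (hε : 0 < ε) : x0 ε < ε := by
  unfold x0; nlinarith [one_lt_sqrt_three]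

noncomputable def gRegular (ε x : ℝ) : ℝ :=
  |x - 4*ε + x0 ε| ^ ((4 - 2*Real.sqrt 3) * ε) *
    (x + ε) ^ (-(8*ε)) *
    Real.exp (12*ε^3/(ε+x)^2 + 12*ε^2/(ε+x))

lemma gfun_eq_sign_mul (ε x : ℝ) :
    gfun ε x = Real.sign (x - x0 ε) * |x - x0 ε| ^ ((4 + 2*Real.sqrt 3) * ε) * gRegular ε x := by
  unfold gfun gRegular; ring

lemma gRegular_pos (hε : 0 < ε) (hx : x ∈ Icc 0 ε) : 0 < gRegular ε x := by
  obtain ⟨h0, hxε⟩ := hx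
  have hbase : x - 4*ε + x0 ε ≠ 0 := by linarith [x0_lt_self hε]
  unfold gRegular
  positivity

lemma continuousOn_gRegular (hε : 0 < ε) : ContinuousOn (gRegular ε) (Icc 0 ε) := by
  have hexp : 0 ≤ (4 - 2*Real.sqrt 3) * ε := by nlinarith [sqrt_three_lt_two]
  refine (ContinuousOn.mul (Continuous.continuousOn ?_) ?_).mul (ContinuousOn.rexp ?_)
  · exact (by fun_prop : Continuous fun x => |x - 4*ε + x0 ε|).rpow_const fun _ => Or.inr hexp
  · exact (continuousOn_id.add continuousOn_const).rpow_const fun x hx => Or.inl (by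
      have := hx.1; dsimp; positivity)
  · fun_prop (disch := rintro x ⟨hx, -⟩; positivity)

lemma continuousOn_gfun (hε : 0 < ε) : ContinuousOn (gfun ε) (Icc 0 ε) := by
  have ha : 0 < (4 + 2*Real.sqrt 3) * ε := by positivity
  rw [funext (gfun_eq_sign_mul ε)]
  exact ((continuous_sign_mul_abs_rpow ha).comp (continuous_sub_right _)).continuousOn.mul
    (continuousOn_gRegular hε)

lemma gfun_pos (hε : 0 < ε) (hx : x0 ε < x) (hxε : x ≤ ε) : 0 < gfun ε x := by
  have hreg := gRegular_pos hε ⟨(x0_pos hε).le.trans hx.le, hxε⟩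
  rw [gfun_eq_sign_mul, Real.sign_of_pos (sub_pos.2 hx), one_mul]
  have := sub_pos.2 hx
  positivity

lemma gfun_neg (hε : 0 < ε) (h0 : 0 ≤ x) (hx : x < x0 ε) : gfun ε x < 0 := by
  have hreg := gRegular_pos hε ⟨h0, hx.le.trans (x0_lt_self hε).le⟩
  rw [gfun_eq_sign_mul, Real.sign_of_neg (sub_neg.2 hx), neg_one_mul, neg_mul, neg_lt_zero]
  have := (sub_neg.2 hx).ne
  positivity

lemma gfun_self_pos (hε : 0 < ε) : 0 < gfun ε ε :=
  gfun_pos hε (x0_lt_self hε) le_rfl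

lemma gfun_x0 (ε : ℝ) : gfun ε (x0 ε) = 0 := by
  simp [gfun_eq_sign_mul]

lemma intervalIntegrable_inv_gfun (hε : 0 < ε) (hsmall : (4 + 2*Real.sqrt 3) * ε < 1) :
    IntervalIntegrable (fun x => (gfun ε x)⁻¹) volume 0 ε := by
  set a := (4 + 2*Real.sqrt 3) * ε with ha
  have hdom : IntervalIntegrable (fun x => |x - x0 ε| ^ (-a) * (gRegular ε x)⁻¹) volume 0 ε :=
    (intervalIntegrable_abs_sub_rpow (by linarith) _ _ _).mul_continuousOn <| by
      rw [uIcc_of_le hε.le]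
      exact (continuousOn_gRegular hε).inv₀ fun x hx => (gRegular_pos hε hx).ne'
  have hmeas : AEStronglyMeasurable (fun x => (gfun ε x)⁻¹) (volume.restrict (uIoc 0 ε)) := by
    rw [uIoc_of_le hε.le]
    exact (((continuousOn_gfun hε).mono Ioc_subset_Icc_self).aemeasurable
      measurableSet_Ioc).inv.aestronglyMeasurable
  refine hdom.mono_fun hmeas (ae_restrict_of_forall_mem measurableSet_uIoc fun x hx => ?_)
  rw [uIoc_of_le hε.le] at hx
  have hreg := gRegular_pos hε (Ioc_subset_Icc_self hx)
  rcases eq_or_ne x (x0 ε) with rfl | hne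
  · simp only [gfun_x0, inv_zero, norm_zero]
    exact norm_nonneg _
  · have hsign : |Real.sign (x - x0 ε)| = 1 := by
      rcases Real.sign_apply_eq_of_ne_zero _ (sub_ne_zero.2 hne) with h | h <;> simp [h]
    simp only [gfun_eq_sign_mul, norm_inv, norm_mul, Real.norm_eq_abs, hsign,
      abs_of_pos hreg, abs_of_nonneg (rpow_nonneg (abs_nonneg _) _), Real.rpow_neg (abs_nonneg _),
      ← ha, mul_inv, inv_one, one_mul, le_refl]

lemma pfun_of_le (hx : x ≤ ε) : pfun ε x = gfun ε x / (6 * gfun ε ε) := if_pos hx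

lemma pfun_eq_gfun_min (hε : 0 < ε) (hε' : ε ≤ 1/2) (x : ℝ) :
    pfun ε x = gfun ε (min (min x (1 - x)) ε) / (6 * gfun ε ε) := by
  have hg : gfun ε ε ≠ 0 := (gfun_self_pos hε).ne'
  unfold pfun
  split_ifs with h₁ h₂
  · rw [min_eq_left (show x ≤ 1 - x by linarith), min_eq_left h₁]
  · rw [min_eq_right (le_min (by linarith) (by linarith))]
    field_simp
  · rw [min_eq_right (show 1 - x ≤ x by linarith), min_eq_left (show 1 - x ≤ ε by linarith)]

lemma pfun_one_sub (hε : 0 < ε) (hε' : ε ≤ 1/2) (x : ℝ) : pfun ε (1 - x) = pfun ε x := by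
  rw [pfun_eq_gfun_min hε hε', pfun_eq_gfun_min hε hε', sub_sub_cancel, min_comm x]

lemma continuousOn_pfun (hε : 0 < ε) (hε' : ε ≤ 1/2) : ContinuousOn (pfun ε) (Icc 0 1) := by
  rw [funext (pfun_eq_gfun_min hε hε')]
  refine ((continuousOn_gfun hε).comp (by fun_prop) fun x hx => ?_).div_const _
  exact ⟨le_min (le_min hx.1 (by linarith [hx.2])) hε.le, min_le_right _ _⟩

lemma pfun_pos (hε : 0 < ε) (hε' : ε ≤ 1/2) (hx : x ∈ Ioo (x0 ε) (1 - x0 ε)) : 0 < pfun ε x := by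
  rw [pfun_eq_gfun_min hε hε']
  have hmin : x0 ε < min (min x (1 - x)) ε :=
    lt_min (lt_min hx.1 (by linarith [hx.2])) (x0_lt_self hε)
  exact div_pos (gfun_pos hε hmin (min_le_right _ _)) (by linarith [gfun_self_pos hε])

lemma pfun_neg (hε : 0 < ε) (h0 : 0 ≤ x) (hx : x < x0 ε) : pfun ε x < 0 := by
  rw [pfun_of_le (hx.trans (x0_lt_self hε)).le]
  exact div_neg_of_neg_of_pos (gfun_neg hε h0 hx) (by linarith [gfun_self_pos hε])

lemma pfun_x0 (hε : 0 < ε) : pfun ε (x0 ε) = 0 := by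
  rw [pfun_of_le (x0_lt_self hε).le, gfun_x0, zero_div]

lemma integrableOn_inv_pfun (hε : 0 < ε) (hε' : ε ≤ 1/10) :
    IntegrableOn (fun x => (pfun ε x)⁻¹) (Icc 0 1) := by
  have hε2 : ε ≤ 1/2 := by linarith
  set f := fun x => (pfun ε x)⁻¹
  have hleft : IntervalIntegrable f volume 0 ε := by
    refine ((intervalIntegrable_inv_gfun hε ?_).const_mul (6 * gfun ε ε)).congr fun x hx => ?_
    · nlinarith [sqrt_three_lt_two]
    · rw [uIoc_of_le hε.le] at hx
      rw [show f x = (pfun ε x)⁻¹ from rfl, pfun_of_le hx.2, inv_div, div_eq_mul_inv]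
  have hmiddle : IntervalIntegrable f volume ε (1 - ε) := by
    have hpos : ∀ x ∈ Icc ε (1 - ε), pfun ε x ≠ 0 := fun x hx =>
      (pfun_pos hε hε2 ⟨(x0_lt_self hε).trans_le hx.1, by linarith [x0_lt_self hε, hx.2]⟩).ne'
    refine ContinuousOn.intervalIntegrable ?_
    rw [uIcc_of_le (by linarith)]
    exact ((continuousOn_pfun hε hε2).mono (Icc_subset_Icc hε.le (by linarith))).inv₀ hpos
  have hright : IntervalIntegrable f volume (1 - ε) 1 := by
    have := (hleft.comp_sub_left 1).symm
    simpa [f, pfun_one_sub hε hε2] using this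
  rw [← intervalIntegrable_iff_integrableOn_Icc_of_le zero_le_one]
  exact (hleft.trans hmiddle).trans hright

end

theorem stmt0 :
    ∃ ε₀ > (0:ℝ), ∀ ε : ℝ, 0 < ε → ε ≤ ε₀ →
      ContinuousOn (pfun ε) (Icc 0 1) ∧
      IntegrableOn (fun x => (pfun ε x)⁻¹) (Icc 0 1) ∧
      (∀ x ∈ Ioo (x0 ε) (1 - x0 ε), 0 < pfun ε x) ∧
      (∀ x ∈ Ico (0:ℝ) (x0 ε) ∪ Ioc (1 - x0 ε) 1, pfun ε x < 0) ∧
      pfun ε (x0 ε) = 0 ∧ pfun ε (1 - x0 ε) = 0 := by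
  refine ⟨1/10, by norm_num, fun ε hε hε' => ?_⟩
  have hε2 : ε ≤ 1/2 := by linarith
  refine ⟨continuousOn_pfun hε hε2, integrableOn_inv_pfun hε hε', fun x hx => pfun_pos hε hε2 hx,
    ?_, pfun_x0 hε, by rw [pfun_one_sub hε hε2, pfun_x0 hε]⟩
  rintro x (⟨h0, hx⟩ | ⟨hx, h1⟩)
  · exact pfun_neg hε h0 hx
  · rw [← pfun_one_sub hε hε2 x]
    exact pfun_neg hε (by linarith) (by linarith)
end

section
/- For every x ∈ [0,ε], φ₂(x) = −(x−x₀)/(2√3·ε) + (x−x₀)²/(12ε²). Moreover, for every x with |x−x₀| < (3−√3)ε and x ∈ [0,ε], φ₁ has the convergent power series representation φ₁(x) = Σ_{j=0}^∞ b_j (x−x₀)^j with b_j = 6·(−1)^{j+1}·ε^{−j}·(j² + √3·j + √3 − 1)/(3−√3)^{j+3}. Consequently, the indicial polynomial P(α) = a₁·α(α−1) + b₀·α with a₁ = −1/(2√3·ε) and b₀ = −6(√3−1)/(3−√3)³ has exactly the two roots α = 0 and α = 1 − (4+2√3)ε. -/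
open Real Set Filter Topology MeasureTheory

/-!
On `[0, ε]` both coefficients are rational functions of `x / ε`. Since `x₀` is a root of
`1 - 4y + y²` (at `y = 2 - √3`), `φ₂` is the Taylor polynomial of that quadratic at `x₀`.
Since `x + ε = (3 - √3)ε + (x - x₀)`, writing `φ₁ = 6ε²/(x+ε)² - 12ε³/(x+ε)³` and expanding
both terms as binomial series in `x - x₀` gives the coefficients `b_j`, valid for
`|x - x₀| < (3 - √3)ε`. Finally `b₀ = a₁ (4 + 2√3)ε`, which factors the indicial polynomial.
-/

lemma hasSum_inv_add_pow_succ {𝕜 : Type*} [NormedField 𝕜] [CompleteSpace 𝕜] {c t : 𝕜}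
    (h : ‖t‖ < ‖c‖) (k : ℕ) :
    HasSum (fun j : ℕ ↦ ((j + k).choose k : 𝕜) * (-1) ^ j * t ^ j / c ^ (j + k + 1))
      ((c + t) ^ (k + 1))⁻¹ := by
  have hc : c ≠ 0 := norm_pos_iff.mp ((norm_nonneg t).trans_lt h)
  have hr : ‖-t / c‖ < 1 := by
    rwa [norm_div, norm_neg, div_lt_one ((norm_nonneg t).trans_lt h)]
  convert (hasSum_choose_mul_geometric_of_norm_lt_one k hr).div_const (c ^ (k + 1)) using 1
  · ext j
    rw [div_pow, neg_pow, pow_add, pow_add]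
    field_simp
    ring
  · rw [div_div, ← mul_pow, one_sub_div hc, sub_neg_eq_add, div_mul_cancel₀ _ hc, one_div]

lemma phi2_eq_of_le {ε x : ℝ} (hε : ε ≠ 0) (hx : x ≤ ε) :
    phi2 ε x = -(x - x0 ε) / (2 * √3 * ε) + (x - x0 ε) ^ 2 / (12 * ε ^ 2) := by
  have hs : √3 ^ 2 = 3 := Real.sq_sqrt (by norm_num)
  rw [phi2, if_pos hx, x0]
  field_simp
  linear_combination (-4 * ε * x - 2 * ε ^ 2 * √3 + 8 * ε ^ 2) * hs

lemma phi1_eq_of_le {ε x : ℝ} (hε : ε ≠ 0) (hx : x ≤ ε) :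
    phi1 ε x = 6 * ε ^ 2 * ((x + ε) ^ 2)⁻¹ - 12 * ε ^ 3 * ((x + ε) ^ 3)⁻¹ := by
  rw [phi1, if_pos hx, show 1 + x / ε = (x + ε) / ε by field_simp; ring]
  rcases eq_or_ne (x + ε) 0 with h | h
  · simp [h]
  · field_simp
    ring

lemma hasSum_phi1 {ε x : ℝ} (hε : 0 < ε) (hx : x ≤ ε) (hxx0 : |x - x0 ε| < (3 - √3) * ε) :
    HasSum (fun j : ℕ ↦ 6 * (-1 : ℝ) ^ (j + 1) * (ε ^ j)⁻¹ *
        ((j ^ 2 + √3 * j + √3 - 1) / (3 - √3) ^ (j + 3)) * (x - x0 ε) ^ j)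
      (phi1 ε x) := by
  have hc : 0 < (3 - √3) * ε := (abs_nonneg _).trans_lt hxx0
  have hct : ‖x - x0 ε‖ < ‖(3 - √3) * ε‖ := by
    rwa [Real.norm_eq_abs, Real.norm_of_nonneg hc.le]
  have hxct : x + ε = (3 - √3) * ε + (x - x0 ε) := by rw [x0]; ring
  rw [phi1_eq_of_le hε.ne' hx, hxct]
  refine (((hasSum_inv_add_pow_succ hct 1).mul_left (6 * ε ^ 2)).sub
    ((hasSum_inv_add_pow_succ hct 2).mul_left (12 * ε ^ 3))).congr_fun fun j ↦ ?_
  have hchoose : ((j + 2 : ℕ).choose 2 : ℝ) = (j + 2) * (j + 1) / 2 := by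
    rw [Nat.cast_choose_two]; push_cast; ring
  have ha : (3 - √3 : ℝ) ≠ 0 := (pos_of_mul_pos_left hc hε.le).ne'
  rw [hchoose, Nat.choose_one_right, Nat.cast_succ]
  -- both sides are rational in `a = 3 - √3`
  generalize √3 = s at *
  obtain ⟨a, rfl⟩ : ∃ a, s = 3 - a := ⟨3 - s, by ring⟩
  rw [sub_sub_cancel] at *
  field_simp
  ring

lemma mul_mul_sub_one_add_mul_eq_zero_iff {a b β α : ℝ} (ha : a ≠ 0) (hb : b = a * β) :
    a * α * (α - 1) + b * α = 0 ↔ α = 0 ∨ α = 1 - β := by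
  rw [hb, show a * α * (α - 1) + a * β * α = a * (α * (α - (1 - β))) by ring,
    mul_eq_zero, or_iff_right ha, mul_eq_zero, sub_eq_zero]

lemma indicial_coeff_eq {ε : ℝ} (hε : ε ≠ 0) :
    -(6 * (√3 - 1) / (3 - √3) ^ 3) = -(1 / (2 * √3 * ε)) * ((4 + 2 * √3) * ε) := by
  have hs : √3 ^ 2 = 3 := Real.sq_sqrt (by norm_num)
  have ha : (3 - √3 : ℝ) ≠ 0 := by
    rw [sub_ne_zero]; exact fun h ↦ by nlinarith
  field_simp
  linear_combination (-2 * √3 ^ 2 + 14 * √3 - 36) * hs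

theorem stmt4 (ε : ℝ) (hε : ε ∈ Ioo (0:ℝ) (1/2)) :
    (∀ x ∈ Icc (0:ℝ) ε,
      phi2 ε x = -(x - x0 ε)/(2*Real.sqrt 3*ε) + (x - x0 ε)^2/(12*ε^2)) ∧
    (∀ x ∈ Icc (0:ℝ) ε, |x - x0 ε| < (3 - Real.sqrt 3)*ε →
      HasSum
        (fun j : ℕ =>
          (6 * (-1:ℝ)^(j+1) * (ε^j)⁻¹ *
            (((j:ℝ)^2 + Real.sqrt 3 * (j:ℝ) + Real.sqrt 3 - 1) /
              (3 - Real.sqrt 3)^(j+3))) * (x - x0 ε)^j)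
        (phi1 ε x)) ∧
    (∀ α : ℝ,
      (-(1/(2*Real.sqrt 3*ε))) * α * (α - 1) +
        (-(6 * (Real.sqrt 3 - 1) / (3 - Real.sqrt 3)^3)) * α = 0 ↔
      α = 0 ∨ α = 1 - (4 + 2*Real.sqrt 3)*ε) := by
  have hε0 : 0 < ε := hε.1
  refine ⟨fun x hx ↦ phi2_eq_of_le hε0.ne' hx.2, fun x hx hxx0 ↦ hasSum_phi1 hε0 hx.2 hxx0,
    fun α ↦ mul_mul_sub_one_add_mul_eq_zero_iff (neg_ne_zero.mpr (by positivity))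
      (indicial_coeff_eq hε0.ne')⟩
end
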